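/- arXiv:2308.03658 — 7 statements merged into one kernel-verified Lean document; each statement's English description precedes it below -/
import Mathlib

section
/- Let η > 0 and r(γ) = log₂(1+γ) − η·log₂(e)·√(1 − 1/(1+γ)²). If γ₀ > 0 satisfies r(γ₀) = 0, then r is strictly increasing on [γ₀, ∞). -/
/-!
In the variable `x = 1 + γ > 1` and up to the factor `1 / log 2`, the rate is
`g x = log x - η √(1 - 1/x²)`, with `g' x = (1 - η / (x² √(1 - 1/x²))) / x`. So `g` increases
wherever `η < x² √(1 - 1/x²)`, and the right-hand side is increasing in `x`. At the zero
`x₀` we have `η √(1 - 1/x₀²) = log x₀ < x₀² - 1 = x₀² (1 - 1/x₀²)`, which is that inequality at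
`x₀`, hence also at every `x ≥ x₀`.
-/

open Real Set

namespace Real

lemma one_sub_one_div_sq_pos {x : ℝ} (hx : 1 < x) : 0 < 1 - 1 / x ^ 2 :=
  sub_pos.mpr ((div_lt_one (by positivity)).mpr (one_lt_pow₀ hx two_ne_zero))

lemma sqrt_one_sub_one_div_sq_pos {x : ℝ} (hx : 1 < x) : 0 < √(1 - 1 / x ^ 2) :=
  sqrt_pos.mpr (one_sub_one_div_sq_pos hx)

lemma sq_mul_sqrt_one_sub_one_div_sq_le {x y : ℝ} (hx : 1 < x) (hxy : x ≤ y) :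
    x ^ 2 * √(1 - 1 / x ^ 2) ≤ y ^ 2 * √(1 - 1 / y ^ 2) := by
  have hsq : x ^ 2 ≤ y ^ 2 := pow_le_pow_left₀ (by linarith) hxy 2
  have hinv : 1 / y ^ 2 ≤ 1 / x ^ 2 := one_div_le_one_div_of_le (by positivity) hsq
  exact mul_le_mul hsq (sqrt_le_sqrt (by linarith)) (sqrt_nonneg _) (by positivity)

lemma hasDerivAt_sqrt_one_sub_one_div_sq {x : ℝ} (hx : 1 < x) :
    HasDerivAt (fun x : ℝ => √(1 - 1 / x ^ 2)) (1 / (x ^ 3 * √(1 - 1 / x ^ 2))) x := by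
  have hx0 : x ≠ 0 := by positivity
  have hinner : HasDerivAt (fun x : ℝ => 1 - 1 / x ^ 2) (2 / x ^ 3) x := by
    have h := (((hasDerivAt_pow 2 x).inv (pow_ne_zero 2 hx0)).const_sub 1).congr_deriv
      (show _ = 2 / x ^ 3 by field_simp; ring)
    simpa only [one_div, Pi.inv_apply] using h
  refine ((hasDerivAt_sqrt (one_sub_one_div_sq_pos hx).ne').comp x hinner).congr_deriv ?_
  field_simp

lemma lt_sq_mul_sqrt_one_sub_one_div_sq_of_log_eq {η x : ℝ} (hx : 1 < x)
    (hlog : log x = η * √(1 - 1 / x ^ 2)) : η < x ^ 2 * √(1 - 1 / x ^ 2) := by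
  have hs := sqrt_one_sub_one_div_sq_pos hx
  have hlt : log x < x ^ 2 - 1 := by
    have := log_lt_sub_one_of_pos (by positivity) hx.ne'
    nlinarith
  have hsq : x ^ 2 * √(1 - 1 / x ^ 2) * √(1 - 1 / x ^ 2) = x ^ 2 - 1 := by
    rw [mul_assoc, mul_self_sqrt (one_sub_one_div_sq_pos hx).le, mul_sub,
      mul_one_div_cancel (by positivity)]
    ring
  exact lt_of_mul_lt_mul_right (hsq ▸ hlog ▸ hlt) hs.le

lemma strictMonoOn_log_sub_mul_sqrt_one_sub_one_div_sq {η x₀ : ℝ} (hx₀ : 1 < x₀)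
    (hη : η < x₀ ^ 2 * √(1 - 1 / x₀ ^ 2)) :
    StrictMonoOn (fun x : ℝ => log x - η * √(1 - 1 / x ^ 2)) (Ici x₀) := by
  apply strictMonoOn_of_deriv_pos (convex_Ici x₀)
  · intro x hx
    have hx1 : 1 < x := hx₀.trans_le hx
    exact ((hasDerivAt_log (by positivity)).continuousAt.sub
      ((hasDerivAt_sqrt_one_sub_one_div_sq hx1).continuousAt.const_mul η)).continuousWithinAt
  · intro x hx
    rw [interior_Ici] at hx
    have hx1 : 1 < x := hx₀.trans hx
    have hs := sqrt_one_sub_one_div_sq_pos hx1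
    have hηx : η < x ^ 2 * √(1 - 1 / x ^ 2) :=
      hη.trans_le (sq_mul_sqrt_one_sub_one_div_sq_le hx₀ (le_of_lt hx))
    have hx0 : 0 < x := by linarith
    have hderiv : HasDerivAt (fun x : ℝ => log x - η * √(1 - 1 / x ^ 2))
        (x⁻¹ - η * (1 / (x ^ 3 * √(1 - 1 / x ^ 2)))) x :=
      (hasDerivAt_log hx0.ne').sub ((hasDerivAt_sqrt_one_sub_one_div_sq hx1).const_mul η)
    rw [hderiv.deriv, sub_pos, mul_one_div, ← one_div, div_lt_div_iff₀ (by positivity) hx0]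
    nlinarith

end Real

theorem stmt_3_general (η : ℝ) (γ₀ : ℝ) (hγ₀ : 0 < γ₀)
    (hzero : Real.logb 2 (1 + γ₀) -
        η * Real.logb 2 (Real.exp 1) * Real.sqrt (1 - 1 / (1 + γ₀) ^ 2) = 0) :
    StrictMonoOn (fun γ : ℝ =>
        Real.logb 2 (1 + γ) -
          η * Real.logb 2 (Real.exp 1) * Real.sqrt (1 - 1 / (1 + γ) ^ 2))
      (Set.Ici γ₀) := by
  have hlog2 : 0 < log 2 := log_pos one_lt_two
  have hrate : ∀ γ : ℝ, logb 2 (1 + γ) - η * logb 2 (exp 1) * √(1 - 1 / (1 + γ) ^ 2)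
      = (log (1 + γ) - η * √(1 - 1 / (1 + γ) ^ 2)) / log 2 := fun γ => by
    rw [logb, logb, log_exp]
    ring
  have hx₀ : 1 < 1 + γ₀ := by linarith
  have hlog : log (1 + γ₀) = η * √(1 - 1 / (1 + γ₀) ^ 2) := by
    rw [hrate, div_eq_zero_iff, sub_eq_zero] at hzero
    exact hzero.resolve_right hlog2.ne'
  have hg := strictMonoOn_log_sub_mul_sqrt_one_sub_one_div_sq hx₀
    (lt_sq_mul_sqrt_one_sub_one_div_sq_of_log_eq hx₀ hlog)
  intro a ha b hb hab
  simp only [hrate]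
  exact div_lt_div_of_pos_right
    (hg (add_le_add_right (mem_Ici.mp ha) 1) (add_le_add_right (mem_Ici.mp hb) 1)
      (add_lt_add_right hab 1)) hlog2

theorem stmt_3 (η : ℝ) (hη : 0 < η) (γ₀ : ℝ) (hγ₀ : 0 < γ₀)
    (hzero : Real.logb 2 (1 + γ₀) -
        η * Real.logb 2 (Real.exp 1) * Real.sqrt (1 - 1 / (1 + γ₀) ^ 2) = 0) :
    StrictMonoOn (fun γ : ℝ =>
        Real.logb 2 (1 + γ) -
          η * Real.logb 2 (Real.exp 1) * Real.sqrt (1 - 1 / (1 + γ) ^ 2))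
      (Set.Ici γ₀) :=
  stmt_3_general η γ₀ hγ₀ hzero
end

section
/- The function f₁(γ) = (γ+1)·ln(γ+1)/√(γ²+2γ) is injective on (0,∞). -/
open Real Set

/- On `(0, ∞)` the derivative of `f₁` is `(γ² + 2γ - log (γ + 1)) / (γ² + 2γ)^(3/2)`, which is
positive because `log (γ + 1) ≤ γ < γ² + 2γ`; so `f₁` is strictly increasing there. -/

noncomputable def f₁ (γ : ℝ) : ℝ := (γ + 1) * log (γ + 1) / √(γ ^ 2 + 2 * γ)

noncomputable def f₁' (γ : ℝ) : ℝ :=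
  (γ ^ 2 + 2 * γ - log (γ + 1)) / (√(γ ^ 2 + 2 * γ) * (γ ^ 2 + 2 * γ))

lemma hasDerivAt_f₁ {γ : ℝ} (hγ : 0 < γ) : HasDerivAt f₁ (f₁' γ) γ := by
  have hs : 0 < γ ^ 2 + 2 * γ := by positivity
  have hnum : HasDerivAt (fun x => (x + 1) * log (x + 1)) (log (γ + 1) + 1) γ :=
    HasDerivAt.comp_add_const γ 1 (hasDerivAt_mul_log (by positivity))
  have hden : HasDerivAt (fun x => √(x ^ 2 + 2 * x)) ((2 * γ + 2) / (2 * √(γ ^ 2 + 2 * γ))) γ :=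
    (((hasDerivAt_pow 2 γ).add ((hasDerivAt_id γ).const_mul 2)).congr_deriv
      (by simp only [mul_one]; ring)).sqrt hs.ne'
  refine (hnum.div hden (by positivity)).congr_deriv ?_
  rw [f₁']
  field_simp
  rw [sq_sqrt (by positivity)]
  ring

lemma f₁'_pos {γ : ℝ} (hγ : 0 < γ) : 0 < f₁' γ := by
  have hlog : log (γ + 1) ≤ γ := by linarith [log_le_sub_one_of_pos (by linarith : 0 < γ + 1)]
  have hs : 0 < γ ^ 2 + 2 * γ := by positivity
  exact div_pos (by nlinarith) (by positivity)

lemma strictMonoOn_f₁ : StrictMonoOn f₁ (Ioi 0) := by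
  refine strictMonoOn_of_hasDerivWithinAt_pos (f' := f₁') (convex_Ioi 0)
    (fun γ hγ => (hasDerivAt_f₁ hγ).continuousAt.continuousWithinAt) ?_ ?_ <;>
    rw [interior_Ioi]
  · exact fun γ hγ => (hasDerivAt_f₁ hγ).hasDerivWithinAt
  · exact fun γ hγ => f₁'_pos hγ

theorem stmt_6 :
    Set.InjOn (fun γ : ℝ => (γ + 1) * Real.log (γ + 1) / Real.sqrt (γ ^ 2 + 2 * γ))
      (Set.Ioi 0) :=
  strictMonoOn_f₁.injOn
end

section
/- The function h(γ) = ln(γ+1) − (γ+1)(γ²+2γ)²/(3γ²+6γ+1) satisfies h(γ) → 0 as γ → 0⁺ and h(γ) → −∞ as γ → ∞, and h has exactly one sign change on (0,∞): there exists γ̂ > 0 such that h > 0 on (0, γ̂) and h < 0 on (γ̂, ∞). -/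
/-!
Since `h 0 = 0` and `h' γ = hNum γ / ((γ + 1) (3γ² + 6γ + 1)²)` with `hNum` of degree 7, everything
rests on the sign of `hNum`. Dividing by `γ` gives `1/γ + 4 - 14γ - … - 9γ⁶`, which is strictly
decreasing on `(0, ∞)`, so `hNum` has a single positive root `t`. Hence `h` increases strictly on
`[0, t]` and decreases strictly on `[t, ∞)`, and it tends to `-∞` because `log (γ + 1) ≤ γ` while the
rational part is at least `2γ` for `γ ≥ 2`. So `h` crosses zero exactly once.
-/

open Real Filter Set Topology

theorem exists_sign_change_of_strictMonoOn_of_strictAntiOn {α : Type*}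
    [ConditionallyCompleteLinearOrder α] [TopologicalSpace α] [OrderTopology α] [DenselyOrdered α]
    {f : α → ℝ} {a t : α} (hat : a < t) (hfa : f a = 0) (hf : ContinuousOn f (Ici t))
    (hmono : StrictMonoOn f (Icc a t)) (hanti : StrictAntiOn f (Ici t))
    (hbot : Tendsto f atTop atBot) :
    ∃ c, a < c ∧ (∀ x, a < x → x < c → 0 < f x) ∧ ∀ x, c < x → f x < 0 := by
  have hft : 0 < f t := hfa ▸ hmono (left_mem_Icc.2 hat.le) (right_mem_Icc.2 hat.le) hat
  obtain ⟨b, hfb, htb⟩ :=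
    ((hbot.eventually (eventually_lt_atBot 0)).and (eventually_ge_atTop t)).exists
  obtain ⟨c, hc, hfc⟩ :=
    intermediate_value_Icc' htb (hf.mono Icc_subset_Ici_self) ⟨hfb.le, hft.le⟩
  have htc : t < c := hc.1.lt_of_ne (by rintro rfl; linarith)
  refine ⟨c, hat.trans htc, fun x hax hxc => ?_, fun x hcx => ?_⟩
  · rcases le_or_gt x t with hxt | htx
    · exact hfa ▸ hmono (left_mem_Icc.2 hat.le) ⟨hax.le, hxt⟩ hax
    · exact hfc ▸ hanti (mem_Ici.2 htx.le) hc.1 hxc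
  · exact hfc ▸ hanti hc.1 (mem_Ici.2 (hc.1.trans hcx.le)) hcx

noncomputable def hFun (γ : ℝ) : ℝ :=
  Real.log (γ + 1) - (γ + 1) * (γ ^ 2 + 2 * γ) ^ 2 / (3 * γ ^ 2 + 6 * γ + 1)

def hNum (γ : ℝ) : ℝ :=
  1 + 4 * γ - 14 * γ ^ 2 - 128 * γ ^ 3 - 226 * γ ^ 4 - 173 * γ ^ 5 - 63 * γ ^ 6 - 9 * γ ^ 7

lemma hFun_zero : hFun 0 = 0 := by
  simp [hFun]

lemma hasDerivAt_hFun {γ : ℝ} (h₁ : γ + 1 ≠ 0) (hD : 3 * γ ^ 2 + 6 * γ + 1 ≠ 0) :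
    HasDerivAt hFun (hNum γ / ((γ + 1) * (3 * γ ^ 2 + 6 * γ + 1) ^ 2)) γ := by
  have hx := hasDerivAt_id' γ
  have hlog := (hx.add_const 1).log h₁
  have hfrac := ((hx.add_const 1).mul (((hasDerivAt_pow 2 γ).add (hx.const_mul 2)).pow 2)).div
    ((((hasDerivAt_pow 2 γ).const_mul 3).add (hx.const_mul 6)).add_const 1) hD
  refine (hlog.sub hfrac).congr_deriv ?_
  simp only [hNum, Pi.add_apply, Pi.mul_apply, Pi.pow_apply]
  rw [div_sub_div _ _ h₁ (pow_ne_zero 2 hD)]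
  congr 1
  ring

lemma hFun_denom_pos {γ : ℝ} (hγ : 0 ≤ γ) : 0 < 3 * γ ^ 2 + 6 * γ + 1 := by
  positivity

lemma hFun_deriv_denom_pos {γ : ℝ} (hγ : 0 ≤ γ) :
    0 < (γ + 1) * (3 * γ ^ 2 + 6 * γ + 1) ^ 2 := by
  positivity

lemma hasDerivAt_hFun_of_nonneg {γ : ℝ} (hγ : 0 ≤ γ) :
    HasDerivAt hFun (hNum γ / ((γ + 1) * (3 * γ ^ 2 + 6 * γ + 1) ^ 2)) γ :=
  hasDerivAt_hFun (by positivity) (hFun_denom_pos hγ).ne'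

lemma continuousOn_hFun : ContinuousOn hFun (Ici 0) :=
  fun _ hγ => (hasDerivAt_hFun_of_nonneg hγ).continuousAt.continuousWithinAt

lemma tendsto_hFun_nhdsGT_zero : Tendsto hFun (𝓝[>] 0) (𝓝 0) := by
  have := (hasDerivAt_hFun_of_nonneg le_rfl).continuousAt.tendsto
  rw [hFun_zero] at this
  exact this.mono_left nhdsWithin_le_nhds

lemma hFun_le_neg_self {γ : ℝ} (hγ : 2 ≤ γ) : hFun γ ≤ -γ := by
  have hlog : Real.log (γ + 1) ≤ γ := by
    linarith [Real.log_le_sub_one_of_pos (show 0 < γ + 1 by linarith)]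
  have hfrac : 2 * γ ≤ (γ + 1) * (γ ^ 2 + 2 * γ) ^ 2 / (3 * γ ^ 2 + 6 * γ + 1) := by
    rw [le_div_iff₀ (hFun_denom_pos (by linarith))]
    nlinarith [mul_nonneg (mul_nonneg (sub_nonneg.2 hγ) (sub_nonneg.2 hγ)) (sub_nonneg.2 hγ)]
  unfold hFun
  linarith

lemma tendsto_hFun_atTop : Tendsto hFun atTop atBot :=
  tendsto_atBot_mono' atTop ((eventually_ge_atTop 2).mono fun _ => hFun_le_neg_self)
    tendsto_neg_atTop_atBot

lemma strictAntiOn_hNum_div_self : StrictAntiOn (fun s => hNum s / s) (Ioi 0) := by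
  have hNum_div_eq : ∀ s : ℝ, 0 < s → hNum s / s =
      s⁻¹ + 4 - 14 * s - 128 * s ^ 2 - 226 * s ^ 3 - 173 * s ^ 4 - 63 * s ^ 5 - 9 * s ^ 6 := by
    intro s hs
    field_simp
    unfold hNum
    ring
  intro a ha b hb hab
  have hinv : b⁻¹ < a⁻¹ := (inv_lt_inv₀ hb ha).2 hab
  have hpow : ∀ n ≠ 0, a ^ n < b ^ n := fun n hn => pow_lt_pow_left₀ hab ha.le hn
  simp only [hNum_div_eq a ha, hNum_div_eq b hb]
  linarith [hpow 2 two_ne_zero, hpow 3 three_ne_zero, hpow 4 four_ne_zero, hpow 5 (by norm_num),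
    hpow 6 (by norm_num)]

lemma exists_hNum_sign_change :
    ∃ t, 0 < t ∧ (∀ s, 0 < s → s < t → 0 < hNum s) ∧ ∀ s, t < s → hNum s < 0 := by
  have hcont : ContinuousOn hNum (Icc (1 / 10) 1) := by
    unfold hNum
    fun_prop
  obtain ⟨t, ht, hNum_t⟩ := intermediate_value_Icc' (by norm_num) hcont
    (show (0 : ℝ) ∈ Icc (hNum 1) (hNum (1 / 10)) by constructor <;> norm_num [hNum])
  have ht₀ : (0 : ℝ) < t := by linarith [ht.1]
  refine ⟨t, ht₀, fun s hs hst => ?_, fun s hts => ?_⟩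
  · have : hNum t / t < hNum s / s := strictAntiOn_hNum_div_self hs ht₀ hst
    rwa [hNum_t, zero_div, div_pos_iff_of_pos_right hs] at this
  · have hs := ht₀.trans hts
    have : hNum s / s < hNum t / t := strictAntiOn_hNum_div_self ht₀ hs hts
    rwa [hNum_t, zero_div, div_lt_iff₀ hs, zero_mul] at this

lemma strictMonoOn_hFun {t : ℝ} (hpos : ∀ s, 0 < s → s < t → 0 < hNum s) :
    StrictMonoOn hFun (Icc 0 t) := by
  refine strictMonoOn_of_hasDerivWithinAt_pos (convex_Icc 0 t)
    (f' := fun x => hNum x / ((x + 1) * (3 * x ^ 2 + 6 * x + 1) ^ 2))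
    (continuousOn_hFun.mono Icc_subset_Ici_self) ?_ ?_
  · exact fun x hx => (hasDerivAt_hFun_of_nonneg (interior_subset hx).1).hasDerivWithinAt
  · rw [interior_Icc]
    intro x hx
    exact div_pos (hpos x hx.1 hx.2) (hFun_deriv_denom_pos hx.1.le)

lemma strictAntiOn_hFun {t : ℝ} (ht : 0 ≤ t) (hneg : ∀ s, t < s → hNum s < 0) :
    StrictAntiOn hFun (Ici t) := by
  refine strictAntiOn_of_hasDerivWithinAt_neg (convex_Ici t)
    (f' := fun x => hNum x / ((x + 1) * (3 * x ^ 2 + 6 * x + 1) ^ 2))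
    (continuousOn_hFun.mono (Ici_subset_Ici.2 ht)) ?_ ?_
  · exact fun x hx => (hasDerivAt_hFun_of_nonneg (ht.trans (interior_subset hx))).hasDerivWithinAt
  · rw [interior_Ici]
    intro x hx
    exact div_neg_of_neg_of_pos (hneg x hx) (hFun_deriv_denom_pos (ht.trans hx.le))

theorem stmt_8 :
    Filter.Tendsto
      (fun γ : ℝ =>
        Real.log (γ + 1) - (γ + 1) * (γ ^ 2 + 2 * γ) ^ 2 / (3 * γ ^ 2 + 6 * γ + 1))
      (nhdsWithin 0 (Set.Ioi 0)) (nhds 0) ∧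
    Filter.Tendsto
      (fun γ : ℝ =>
        Real.log (γ + 1) - (γ + 1) * (γ ^ 2 + 2 * γ) ^ 2 / (3 * γ ^ 2 + 6 * γ + 1))
      atTop atBot ∧
    ∃ γhat : ℝ, 0 < γhat ∧
      (∀ γ : ℝ, 0 < γ → γ < γhat →
        0 < Real.log (γ + 1) - (γ + 1) * (γ ^ 2 + 2 * γ) ^ 2 / (3 * γ ^ 2 + 6 * γ + 1)) ∧
      (∀ γ : ℝ, γhat < γ →
        Real.log (γ + 1) - (γ + 1) * (γ ^ 2 + 2 * γ) ^ 2 / (3 * γ ^ 2 + 6 * γ + 1) < 0) := by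
  obtain ⟨t, ht, hpos, hneg⟩ := exists_hNum_sign_change
  exact ⟨tendsto_hFun_nhdsGT_zero, tendsto_hFun_atTop,
    exists_sign_change_of_strictMonoOn_of_strictAntiOn ht hFun_zero
      (continuousOn_hFun.mono (Ici_subset_Ici.2 ht.le)) (strictMonoOn_hFun hpos)
      (strictAntiOn_hFun ht.le hneg) tendsto_hFun_atTop⟩
end

section
/- For every Ω > 0 and m > 0, (Ω·2^{2Ω/m + 2})/(m·log₂ e) − 2^{4Ω/m} + 1 ≤ 0; consequently the function m ↦ (2/(m·log₂ e))·(2^{2Ω/m}+1)/(2^{2Ω/m}−1) is nonincreasing in m on (0,∞) for each fixed Ω > 0. -/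
/-!
Put `t = Ω log 2 / m`, so that `2 ^ (2Ω/m) = exp (2t)` and `2 / (m log₂ e) = 2t / Ω`.
The inequality becomes `4t e^{2t} + 1 ≤ e^{4t}`, i.e. `2t ≤ sinh (2t)`, and the function of `m`
becomes `(2/Ω) · t / tanh t`. Since `t` decreases in `m`, it suffices that `t / tanh t` increases
on `(0, ∞)`; by the addition formulas this reduces to `sinh a / a ≤ sinh b / b` for `0 < a ≤ b`,
i.e. to the monotonicity of secant slopes from the origin of the function `sinh`, which is
convex on `[0, ∞)` and vanishes at `0`.
-/

open Real Set

namespace Real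

lemma convexOn_sinh_Ici : ConvexOn ℝ (Ici 0) sinh :=
  MonotoneOn.convexOn_of_deriv (convex_Ici 0) continuous_sinh.continuousOn
    differentiable_sinh.differentiableOn
    (by rw [deriv_sinh]; exact cosh_strictMonoOn.monotoneOn.mono interior_subset)

lemma mul_sinh_le_mul_sinh {a b : ℝ} (ha : 0 ≤ a) (hab : a ≤ b) :
    b * sinh a ≤ a * sinh b := by
  rcases ha.eq_or_lt with rfl | ha
  · simp
  have hb : 0 < b := ha.trans_le hab
  have hslope := convexOn_sinh_Ici.secant_mono (a := 0) self_mem_Ici ha.le hb.le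
    ha.ne' hb.ne' hab
  simp only [sinh_zero, sub_zero] at hslope
  rw [div_le_div_iff₀ ha hb] at hslope
  linarith

lemma tanh_eq_exp_two_mul (t : ℝ) : tanh t = (exp (2 * t) - 1) / (exp (2 * t) + 1) := by
  have hexp : exp (2 * t) = exp t * exp t := by rw [← exp_add]; ring_nf
  rw [tanh_eq, exp_neg, hexp]
  field_simp

lemma monotoneOn_self_div_tanh : MonotoneOn (fun t => t / tanh t) (Ioi 0) := by
  intro s hs t ht hst
  simp only [mem_Ioi] at hs ht
  have hslope := mul_sinh_le_mul_sinh (sub_nonneg.2 hst) (by linarith : t - s ≤ t + s)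
  rw [sinh_add, sinh_sub] at hslope
  simp only [tanh_eq_sinh_div_cosh, div_div_eq_mul_div]
  rw [div_le_div_iff₀ (sinh_pos_iff.2 hs) (sinh_pos_iff.2 ht)]
  linear_combination hslope / 2

lemma two_mul_mul_exp_add_one_le_exp_two_mul {x : ℝ} (hx : 0 ≤ x) :
    2 * x * exp x + 1 ≤ exp (2 * x) := by
  have hinv : exp (-x) * exp x = 1 := by rw [← exp_add]; simp
  have hexp : exp (2 * x) = exp x * exp x := by rw [← exp_add]; ring_nf
  calc 2 * x * exp x + 1 ≤ 2 * sinh x * exp x + 1 := by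
        gcongr; exact self_le_sinh_iff.2 hx
    _ = exp (2 * x) := by rw [sinh_eq, hexp]; linear_combination -hinv

lemma two_rpow_mul_div (c Ω m : ℝ) : (2 : ℝ) ^ (c * Ω / m) = exp (c * (Ω * log 2 / m)) := by
  rw [rpow_def_of_pos two_pos]
  ring_nf

lemma logb_two_exp_one : logb 2 (exp 1) = (log 2)⁻¹ := by
  rw [logb, log_exp, one_div]

end Real

theorem stmt_9 :
    (∀ Ω m : ℝ, 0 < Ω → 0 < m →
      Ω * (2 : ℝ) ^ (2 * Ω / m + 2) / (m * Real.logb 2 (Real.exp 1)) -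
          (2 : ℝ) ^ (4 * Ω / m) + 1 ≤ 0) ∧
    ∀ Ω : ℝ, 0 < Ω →
      AntitoneOn
        (fun m : ℝ =>
          2 / (m * Real.logb 2 (Real.exp 1)) *
            (((2 : ℝ) ^ (2 * Ω / m) + 1) / ((2 : ℝ) ^ (2 * Ω / m) - 1)))
        (Set.Ioi 0) := by
  refine ⟨fun Ω m hΩ hm => ?_, fun Ω hΩ a ha b hb hab => ?_⟩
  · set t := Ω * log 2 / m
    have hineq := two_mul_mul_exp_add_one_le_exp_two_mul (x := 2 * t) (by positivity)
    have hprefactor : Ω * (exp (2 * t) * 2 ^ (2 : ℝ)) / (m * (log 2)⁻¹) =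
        2 * (2 * t) * exp (2 * t) := by
      simp only [t]; field_simp; norm_num
    rw [rpow_add two_pos, two_rpow_mul_div, two_rpow_mul_div, logb_two_exp_one, hprefactor,
      show 4 * t = 2 * (2 * t) by ring]
    linarith
  · have hform : ∀ m, 0 < m → 2 / (m * logb 2 (exp 1)) *
        ((2 ^ (2 * Ω / m) + 1) / (2 ^ (2 * Ω / m) - 1)) =
        2 / Ω * ((Ω * log 2 / m) / tanh (Ω * log 2 / m)) := by
      intro m hm
      rw [two_rpow_mul_div, logb_two_exp_one, tanh_eq_exp_two_mul, div_div_eq_mul_div]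
      field_simp
    simp only [mem_Ioi] at ha hb
    simp only [hform a ha, hform b hb]
    gcongr 2 / Ω * ?_
    exact monotoneOn_self_div_tanh (by positivity : 0 < Ω * log 2 / b)
      (by positivity : 0 < Ω * log 2 / a) (by gcongr)
end

section
/- Let n > 0, γ > 0, and 0 ≤ Q ≤ √n·log₂(1+γ)/(log₂ e·√(1 − 1/(1+γ)²)). Then Ω''(γ) := log₂ e·( −n/(γ+1)² + √n·Q·((γ+1)² + 2(γ²+2γ))/((γ+1)³·(γ²+2γ)^{3/2}) ) satisfies Ω''(γ) ≤ n·log₂ e·( −1/(γ+1)² + ((γ+1)²+2(γ²+2γ))/(γ·(γ+1)²·(γ+2)²) ). -/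
open Real

theorem stmt_14 (n γ Q : ℝ) (hn : 0 < n) (hγ : 0 < γ) (hQ0 : 0 ≤ Q)
    (hQ : Q ≤ Real.sqrt n * Real.logb 2 (1 + γ) /
        (Real.logb 2 (Real.exp 1) * Real.sqrt (1 - 1 / (1 + γ) ^ 2))) :
    Real.logb 2 (Real.exp 1) *
        (-(n / (γ + 1) ^ 2) +
          Real.sqrt n * Q * ((γ + 1) ^ 2 + 2 * (γ ^ 2 + 2 * γ)) /
            ((γ + 1) ^ 3 * (γ ^ 2 + 2 * γ) ^ ((3 : ℝ) / 2))) ≤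
      n * Real.logb 2 (Real.exp 1) *
        (-(1 / (γ + 1) ^ 2) +
          ((γ + 1) ^ 2 + 2 * (γ ^ 2 + 2 * γ)) / (γ * (γ + 1) ^ 2 * (γ + 2) ^ 2)) := by
  have hlog2 : (0:ℝ) < Real.log 2 := Real.log_pos one_lt_two
  have hL : Real.logb 2 (Real.exp 1) = 1 / Real.log 2 := by
    simp [Real.logb, Real.log_exp]
  have hγ1 : (0:ℝ) < γ + 1 := by linarith
  have hs : (0:ℝ) < γ ^ 2 + 2 * γ := by nlinarith
  have hss : (0:ℝ) < Real.sqrt (γ ^ 2 + 2 * γ) := Real.sqrt_pos.2 hs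
  have hsmul : Real.sqrt (γ ^ 2 + 2 * γ) * Real.sqrt (γ ^ 2 + 2 * γ) = γ ^ 2 + 2 * γ :=
    Real.mul_self_sqrt hs.le
  have hsq : Real.sqrt (1 - 1 / (1 + γ) ^ 2) = Real.sqrt (γ ^ 2 + 2 * γ) / (γ + 1) := by
    have h : 1 - 1 / (1 + γ) ^ 2 = (γ ^ 2 + 2 * γ) / (γ + 1) ^ 2 := by
      field_simp
      ring
    rw [h, Real.sqrt_div hs.le, Real.sqrt_sq hγ1.le]
  have hrpow : (γ ^ 2 + 2 * γ) ^ ((3:ℝ)/2)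
      = (γ ^ 2 + 2 * γ) * Real.sqrt (γ ^ 2 + 2 * γ) := by
    rw [show (3:ℝ)/2 = 1 + 1/2 by norm_num, Real.rpow_add hs, Real.rpow_one,
      ← Real.sqrt_eq_rpow]
  have hlogγ : Real.log (1 + γ) ≤ γ := by
    have := Real.log_le_sub_one_of_pos (show (0:ℝ) < 1 + γ by linarith)
    linarith
  have hnn : Real.sqrt n * Real.sqrt n = n := Real.mul_self_sqrt hn.le
  have hsn : 0 ≤ Real.sqrt n := Real.sqrt_nonneg n
  have hA : (0:ℝ) < (γ + 1) ^ 2 + 2 * (γ ^ 2 + 2 * γ) := by nlinarith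
  have hQ' : Real.sqrt n * Q ≤ n * γ * (γ + 1) / Real.sqrt (γ ^ 2 + 2 * γ) := by
    have h1 : Real.sqrt n * Real.logb 2 (1 + γ) /
        (Real.logb 2 (Real.exp 1) * Real.sqrt (1 - 1 / (1 + γ) ^ 2)) =
        Real.sqrt n * Real.log (1 + γ) * (γ + 1) / Real.sqrt (γ ^ 2 + 2 * γ) := by
      rw [hL, hsq, Real.logb]
      field_simp
    rw [h1] at hQ
    have h2 : Real.sqrt n * Q ≤
        Real.sqrt n * (Real.sqrt n * Real.log (1 + γ) * (γ + 1) / Real.sqrt (γ ^ 2 + 2 * γ)) :=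
      mul_le_mul_of_nonneg_left hQ hsn
    calc Real.sqrt n * Q ≤ _ := h2
      _ = n * Real.log (1 + γ) * (γ + 1) / Real.sqrt (γ ^ 2 + 2 * γ) := by
          rw [show Real.sqrt n * (Real.sqrt n * Real.log (1 + γ) * (γ + 1) /
              Real.sqrt (γ ^ 2 + 2 * γ)) = Real.sqrt n * Real.sqrt n * Real.log (1 + γ) *
              (γ + 1) / Real.sqrt (γ ^ 2 + 2 * γ) from by ring, hnn]
      _ ≤ n * γ * (γ + 1) / Real.sqrt (γ ^ 2 + 2 * γ) := by gcongr
  have key : Real.sqrt n * Q * ((γ + 1) ^ 2 + 2 * (γ ^ 2 + 2 * γ)) /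
      ((γ + 1) ^ 3 * ((γ ^ 2 + 2 * γ) * Real.sqrt (γ ^ 2 + 2 * γ))) ≤
      n * (((γ + 1) ^ 2 + 2 * (γ ^ 2 + 2 * γ)) / (γ * (γ + 1) ^ 2 * (γ + 2) ^ 2)) := by
    have hden : (0:ℝ) < (γ + 1) ^ 3 * ((γ ^ 2 + 2 * γ) * Real.sqrt (γ ^ 2 + 2 * γ)) := by
      positivity
    calc Real.sqrt n * Q * ((γ + 1) ^ 2 + 2 * (γ ^ 2 + 2 * γ)) /
        ((γ + 1) ^ 3 * ((γ ^ 2 + 2 * γ) * Real.sqrt (γ ^ 2 + 2 * γ)))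
        ≤ (n * γ * (γ + 1) / Real.sqrt (γ ^ 2 + 2 * γ)) * ((γ + 1) ^ 2 + 2 * (γ ^ 2 + 2 * γ)) /
          ((γ + 1) ^ 3 * ((γ ^ 2 + 2 * γ) * Real.sqrt (γ ^ 2 + 2 * γ))) := by
          gcongr
      _ = n * (((γ + 1) ^ 2 + 2 * (γ ^ 2 + 2 * γ)) / (γ * (γ + 1) ^ 2 * (γ + 2) ^ 2)) := by
          have h2 : Real.sqrt (γ * 2 + γ ^ 2) ^ 2 = γ * 2 + γ ^ 2 :=
            Real.sq_sqrt (by nlinarith)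
          field_simp
          ring_nf
          rw [h2]
  have hLpos : (0:ℝ) < Real.logb 2 (Real.exp 1) := by rw [hL]; positivity
  rw [hrpow]
  have h := mul_le_mul_of_nonneg_left key hLpos.le
  calc Real.logb 2 (Real.exp 1) *
        (-(n / (γ + 1) ^ 2) +
          Real.sqrt n * Q * ((γ + 1) ^ 2 + 2 * (γ ^ 2 + 2 * γ)) /
            ((γ + 1) ^ 3 * ((γ ^ 2 + 2 * γ) * Real.sqrt (γ ^ 2 + 2 * γ))))
      = Real.logb 2 (Real.exp 1) * (-(n / (γ + 1) ^ 2)) +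
        Real.logb 2 (Real.exp 1) *
          (Real.sqrt n * Q * ((γ + 1) ^ 2 + 2 * (γ ^ 2 + 2 * γ)) /
            ((γ + 1) ^ 3 * ((γ ^ 2 + 2 * γ) * Real.sqrt (γ ^ 2 + 2 * γ)))) := by ring
    _ ≤ Real.logb 2 (Real.exp 1) * (-(n / (γ + 1) ^ 2)) +
        Real.logb 2 (Real.exp 1) *
          (n * (((γ + 1) ^ 2 + 2 * (γ ^ 2 + 2 * γ)) / (γ * (γ + 1) ^ 2 * (γ + 2) ^ 2))) := by
        linarith [h]
    _ = n * Real.logb 2 (Real.exp 1) *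
        (-(1 / (γ + 1) ^ 2) +
          ((γ + 1) ^ 2 + 2 * (γ ^ 2 + 2 * γ)) / (γ * (γ + 1) ^ 2 * (γ + 2) ^ 2)) := by ring
end

section
/- Let K ≥ 1, and for k = 1,…,K let a_k > 0, b_k > 0 be constants with exponents α = 2n/(2n+m), β = m/(2n+m) for n, m > 0. Define p_k(λ) = a_k^α·(b_k/λ)^β − a_k for λ > 0. Then λ ↦ Σ_k p_k(λ) is strictly decreasing and continuous on (0,∞) with range (−Σ a_k, ∞); hence for any P_max > 0 there is a unique λ* > 0 with Σ_k p_k(λ*) = P_max, and it satisfies (1/λ*)^β = (P_max + Σ_i a_i)/(Σ_i a_i^α·b_i^β), giving the closed form p_k* = (P_max + Σ_i a_i)·(a_k^α b_k^β)/(Σ_i a_i^α b_i^β) − a_k. -/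
/-!
Each term `a_k ^ α * (b_k / λ) ^ β - a_k` equals `a_k ^ α * b_k ^ β * λ ^ (-β) - a_k`,
so the total power is `C * λ ^ (-β) - A` with `C = ∑ a_i ^ α * b_i ^ β > 0` and `A = ∑ a_i`.
This is a continuous, strictly decreasing bijection from `(0, ∞)` onto `(-A, ∞)`, inverted
explicitly by `λ ^ (-β) = (P + A) / C`.
-/

open Real Finset

theorem Set.InjOn.existsUnique_of_mem_image {α γ : Type*} {f : α → γ} {s : Set α}
    (hf : s.InjOn f) {y : γ} (hy : y ∈ f '' s) : ∃! x, x ∈ s ∧ f x = y := by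
  obtain ⟨x, hx, rfl⟩ := hy
  exact ⟨x, ⟨hx, rfl⟩, fun x' ⟨hx', hfx'⟩ => hf hx' hx hfx'⟩

theorem mul_div_rpow_eq_mul_rpow_mul_rpow_neg {c b x : ℝ} (hb : 0 ≤ b) (hx : 0 < x) (β : ℝ) :
    c * (b / x) ^ β = c * b ^ β * x ^ (-β) := by
  rw [div_rpow hb hx.le, rpow_neg hx.le, div_eq_mul_inv, mul_assoc]

theorem sum_mul_div_rpow_sub_eq {ι : Type*} [Fintype ι] (c a b : ι → ℝ)
    (hb : ∀ k, 0 ≤ b k) (β : ℝ) {x : ℝ} (hx : 0 < x) :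
    ∑ k, (c k * (b k / x) ^ β - a k) = (∑ k, c k * b k ^ β) * x ^ (-β) - ∑ k, a k := by
  simp only [mul_div_rpow_eq_mul_rpow_mul_rpow_neg (hb _) hx, sum_sub_distrib, sum_mul]

section PowerProfile

variable {C A β : ℝ}

theorem strictAntiOn_mul_rpow_neg_sub (hC : 0 < C) (hβ : 0 < β) :
    StrictAntiOn (fun x : ℝ => C * x ^ (-β) - A) (Set.Ioi 0) := fun x hx y _ hxy => by
  have := rpow_lt_rpow_of_neg hx hxy (neg_neg_of_pos hβ)
  dsimp only
  gcongr

theorem continuousOn_mul_rpow_neg_sub :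
    ContinuousOn (fun x : ℝ => C * x ^ (-β) - A) (Set.Ioi 0) :=
  ((continuousOn_id.rpow_const fun _ hx => Or.inl (ne_of_gt hx)).const_smul C).sub
    continuousOn_const

theorem mul_rpow_neg_sub_eq_iff (hC : C ≠ 0) {x P : ℝ} :
    C * x ^ (-β) - A = P ↔ x ^ (-β) = (P + A) / C := by
  rw [eq_div_iff hC, sub_eq_iff_eq_add, mul_comm]

theorem image_mul_rpow_neg_sub_Ioi (hC : 0 < C) (hβ : 0 < β) :
    (fun x : ℝ => C * x ^ (-β) - A) '' Set.Ioi 0 = Set.Ioi (-A) := by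
  ext P
  constructor
  · rintro ⟨x, hx, rfl⟩
    have : 0 < C * x ^ (-β) := mul_pos hC (rpow_pos_of_pos hx _)
    simp only [Set.mem_Ioi]
    linarith
  · intro hP
    have hPA : 0 < (P + A) / C := div_pos (by simp only [Set.mem_Ioi] at hP; linarith) hC
    refine ⟨((P + A) / C) ^ (-β⁻¹), rpow_pos_of_pos hPA _, ?_⟩
    rw [mul_rpow_neg_sub_eq_iff hC.ne', ← rpow_mul hPA.le,
      neg_mul_neg, inv_mul_cancel₀ hβ.ne', rpow_one]

end PowerProfile

theorem stmt_16 (K : ℕ) (hK : 1 ≤ K) (n m : ℝ) (hn : 0 < n) (hm : 0 < m)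
    (a b : Fin K → ℝ) (ha : ∀ k, 0 < a k) (hb : ∀ k, 0 < b k) :
    let α : ℝ := 2 * n / (2 * n + m)
    let β : ℝ := m / (2 * n + m)
    let p : Fin K → ℝ → ℝ := fun k lam => a k ^ α * (b k / lam) ^ β - a k
    let S : ℝ → ℝ := fun lam => ∑ k, p k lam
    StrictAntiOn S (Set.Ioi 0) ∧
    ContinuousOn S (Set.Ioi 0) ∧
    S '' Set.Ioi 0 = Set.Ioi (-(∑ k, a k)) ∧
    ∀ Pmax : ℝ, 0 < Pmax →
      (∃! lam : ℝ, 0 < lam ∧ S lam = Pmax) ∧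
      ∀ lam : ℝ, 0 < lam → S lam = Pmax →
        (1 / lam) ^ β = (Pmax + ∑ i, a i) / (∑ i, a i ^ α * b i ^ β) ∧
        ∀ k, p k lam =
          (Pmax + ∑ i, a i) * (a k ^ α * b k ^ β) / (∑ i, a i ^ α * b i ^ β) - a k := by
  intro α β p S
  have : Nonempty (Fin K) := ⟨⟨0, hK⟩⟩
  have hβ : 0 < β := by positivity
  have hA : 0 < ∑ k, a k := sum_pos (fun k _ => ha k) univ_nonempty
  have hC : 0 < ∑ i, a i ^ α * b i ^ β :=
    sum_pos (fun k _ => mul_pos (rpow_pos_of_pos (ha k) α) (rpow_pos_of_pos (hb k) β))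
      univ_nonempty
  have hS : (Set.Ioi 0).EqOn (fun x => (∑ i, a i ^ α * b i ^ β) * x ^ (-β) - ∑ k, a k) S :=
    fun x hx => (sum_mul_div_rpow_sub_eq _ a b (fun k => (hb k).le) β hx).symm
  have hanti := (strictAntiOn_mul_rpow_neg_sub hC hβ).congr hS
  have himage := hS.image_eq ▸ image_mul_rpow_neg_sub_Ioi hC hβ
  refine ⟨hanti,
    continuousOn_mul_rpow_neg_sub.congr hS.symm, himage,
    fun Pmax hP => ⟨?_, fun lam hlam hSP => ?_⟩⟩
  · exact hanti.injOn.existsUnique_of_mem_image (himage ▸ (neg_neg_of_pos hA).trans hP)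
  · have hpow : lam ^ (-β) = (Pmax + ∑ i, a i) / ∑ i, a i ^ α * b i ^ β :=
      (mul_rpow_neg_sub_eq_iff hC.ne').1 ((hS hlam).trans hSP)
    refine ⟨by rw [one_div, inv_rpow hlam.le, ← rpow_neg hlam.le, hpow], fun k => ?_⟩
    show a k ^ α * (b k / lam) ^ β - a k = _
    rw [mul_div_rpow_eq_mul_rpow_mul_rpow_neg (hb k).le hlam, hpow]
    ring
end

section
/- Fix K ≥ 1, m > 0, P_max > 0, and sequences a_k > 0, Q_k ≥ 0, G_k > 0. For n > 0 define p_k(n) = (P_max + Σ_i a_i)·( a_k^{2n/(2n+m)}·e^{2√n Q_k/(2n+m)}·G_k^{m/(2n+m)} ) / ( Σ_i a_i^{2n/(2n+m)}·e^{2√n Q_i/(2n+m)}·G_i^{m/(2n+m)} ) − a_k and q_k(n) = (P_max + Σ_i a_i)·( a_k·e^{Q_k/√n} ) / ( Σ_i a_i·e^{Q_i/√n} ) − a_k. Then for each k, p_k(n) − q_k(n) → 0 as n → ∞. -/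
/-! As `n → ∞` every exponent in `p_k(n)` except `2n/(2n+m) → 1` tends to `0`, and
`e^{Q_k/√n} → 1`, so both the sensing weights of `p` and the rate weights of `q` tend to `a_k`.
Hence `p_k(n)` and `q_k(n)` both tend to `(P_max + Σ a_i) a_k / Σ a_i - a_k`. -/

open Real Finset Filter Topology

section Exponents

variable (m : ℝ)

lemma tendsto_two_mul_add_atTop : Tendsto (fun n : ℝ => 2 * n + m) atTop atTop :=
  tendsto_atTop_add_const_right _ m (tendsto_id.const_mul_atTop two_pos)

lemma tendsto_div_two_mul_add_atTop (c : ℝ) :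
    Tendsto (fun n : ℝ => c / (2 * n + m)) atTop (𝓝 0) :=
  tendsto_const_nhds.div_atTop (tendsto_two_mul_add_atTop m)

lemma tendsto_two_mul_div_two_mul_add_atTop :
    Tendsto (fun n : ℝ => 2 * n / (2 * n + m)) atTop (𝓝 1) := by
  have h := (tendsto_const_nhds (x := (1 : ℝ))).sub (tendsto_div_two_mul_add_atTop m m)
  rw [sub_zero] at h
  refine h.congr' ?_
  filter_upwards [(tendsto_two_mul_add_atTop m).eventually_gt_atTop 0] with n hn
  field_simp
  ring

lemma tendsto_two_mul_sqrt_div_two_mul_add_atTop :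
    Tendsto (fun n : ℝ => 2 * √n / (2 * n + m)) atTop (𝓝 0) := by
  -- `2√n / (2n + m) = 1 / (√n + m / (2√n))`
  have hratio : Tendsto (fun n : ℝ => √n + m / (2 * √n)) atTop atTop :=
    tendsto_sqrt_atTop.atTop_add
      (tendsto_const_nhds.div_atTop (tendsto_sqrt_atTop.const_mul_atTop two_pos))
  refine (tendsto_const_nhds (x := (1 : ℝ))).div_atTop hratio |>.congr' ?_
  filter_upwards [eventually_gt_atTop (0 : ℝ)] with n hn
  have hs : 0 < √n := sqrt_pos.mpr hn
  have hsq : √n * √n = n := mul_self_sqrt hn.le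
  generalize √n = s at hs hsq ⊢
  subst hsq
  field_simp

end Exponents

lemma tendsto_sensing_weight {G : ℝ} (hG : G ≠ 0) (a c m : ℝ) :
    Tendsto (fun n : ℝ => a ^ (2 * n / (2 * n + m)) * exp (2 * √n * c / (2 * n + m)) *
      G ^ (m / (2 * n + m))) atTop (𝓝 a) := by
  have ha : Tendsto (fun n : ℝ => a ^ (2 * n / (2 * n + m))) atTop (𝓝 (a ^ (1 : ℝ))) :=
    tendsto_const_nhds.rpow (tendsto_two_mul_div_two_mul_add_atTop m) (Or.inr one_pos)
  have hexp : Tendsto (fun n : ℝ => exp (2 * √n * c / (2 * n + m))) atTop (𝓝 (exp (0 * c))) := by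
    refine (continuous_exp.tendsto _).comp
      (((tendsto_two_mul_sqrt_div_two_mul_add_atTop m).mul_const c).congr fun n => ?_)
    exact div_mul_eq_mul_div _ _ _
  have hG' : Tendsto (fun n : ℝ => G ^ (m / (2 * n + m))) atTop (𝓝 (G ^ (0 : ℝ))) :=
    tendsto_const_nhds.rpow (tendsto_div_two_mul_add_atTop m m) (Or.inl hG)
  simpa using (ha.mul hexp).mul hG'

lemma tendsto_rate_weight (a c : ℝ) :
    Tendsto (fun n : ℝ => a * exp (c / √n)) atTop (𝓝 a) := by
  have hexp : Tendsto (fun n : ℝ => exp (c / √n)) atTop (𝓝 (exp 0)) :=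
    (continuous_exp.tendsto _).comp (tendsto_const_nhds.div_atTop tendsto_sqrt_atTop)
  simpa using tendsto_const_nhds.mul hexp

lemma tendsto_mul_div_sum {ι α : Type*} [Fintype ι] {l : Filter α} {w : ι → α → ℝ}
    {a : ι → ℝ} (hw : ∀ i, Tendsto (w i) l (𝓝 (a i))) (ha : ∑ i, a i ≠ 0) (C : ℝ) (k : ι) :
    Tendsto (fun n => C * w k n / ∑ i, w i n) l (𝓝 (C * a k / ∑ i, a i)) :=
  (tendsto_const_nhds.mul (hw k)).div (tendsto_finsetSum _ fun i _ => hw i) ha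

theorem stmt_18_general (K : ℕ) (m Pmax : ℝ)
    (a Q G : Fin K → ℝ) (ha : ∀ k, 0 < a k) (hG : ∀ k, 0 < G k) :
    let p : Fin K → ℝ → ℝ := fun k n =>
      (Pmax + ∑ i, a i) *
          (a k ^ (2 * n / (2 * n + m)) * Real.exp (2 * Real.sqrt n * Q k / (2 * n + m)) *
            G k ^ (m / (2 * n + m))) /
          (∑ i, a i ^ (2 * n / (2 * n + m)) * Real.exp (2 * Real.sqrt n * Q i / (2 * n + m)) *
            G i ^ (m / (2 * n + m))) - a k
    let q : Fin K → ℝ → ℝ := fun k n =>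
      (Pmax + ∑ i, a i) * (a k * Real.exp (Q k / Real.sqrt n)) /
          (∑ i, a i * Real.exp (Q i / Real.sqrt n)) - a k
    ∀ k, Filter.Tendsto (fun n : ℝ => p k n - q k n) atTop (nhds 0) := by
  intro p q k
  have hsum : ∑ i, a i ≠ 0 := (sum_pos (fun i _ => ha i) ⟨k, mem_univ k⟩).ne'
  have hp := tendsto_mul_div_sum (fun i => tendsto_sensing_weight (hG i).ne' (a i) (Q i) m)
    hsum (Pmax + ∑ i, a i) k
  have hq := tendsto_mul_div_sum (fun i => tendsto_rate_weight (a i) (Q i))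
    hsum (Pmax + ∑ i, a i) k
  simpa [p, q] using (hp.sub_const (a k)).sub (hq.sub_const (a k))

theorem stmt_18 (K : ℕ) (hK : 1 ≤ K) (m Pmax : ℝ) (hm : 0 < m) (hP : 0 < Pmax)
    (a Q G : Fin K → ℝ) (ha : ∀ k, 0 < a k) (hQ : ∀ k, 0 ≤ Q k) (hG : ∀ k, 0 < G k) :
    let p : Fin K → ℝ → ℝ := fun k n =>
      (Pmax + ∑ i, a i) *
          (a k ^ (2 * n / (2 * n + m)) * Real.exp (2 * Real.sqrt n * Q k / (2 * n + m)) *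
            G k ^ (m / (2 * n + m))) /
          (∑ i, a i ^ (2 * n / (2 * n + m)) * Real.exp (2 * Real.sqrt n * Q i / (2 * n + m)) *
            G i ^ (m / (2 * n + m))) - a k
    let q : Fin K → ℝ → ℝ := fun k n =>
      (Pmax + ∑ i, a i) * (a k * Real.exp (Q k / Real.sqrt n)) /
          (∑ i, a i * Real.exp (Q i / Real.sqrt n)) - a k
    ∀ k, Filter.Tendsto (fun n : ℝ => p k n - q k n) atTop (nhds 0) :=
  stmt_18_general K m Pmax a Q G ha hG
end
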